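/- arXiv:2102.00046 — 2 statements merged into one kernel-verified Lean document; each statement's English description precedes it below -/
import Mathlib

section
/- Consider the two-inverter critical-infrastructure system operating in on-grid mode (grid status I_gs = 1) at a steady state (equilibrium) of the closed-loop dynamics. For each i ∈ {1,2}, let n_i > 0 and m_i > 0 be the frequency- and voltage-droop coefficients, m_int,i the integral droop coefficient, τ_S,i > 0 the power-filter time constant, k_m,i := 1 − τ_S,i·m_int,i/m_i, and let the real numbers ω_ref, ω_r,i, V_r,i, ψ_i, p_i, q_i, P_i, Q_i together with the nominal frequency ω_nom and nominal voltage V_nom satisfy the equilibrium equations: ω_r,i − ω_ref = 0 (angle dynamics of VSI i), ω_nom − ω_ref = 0 (angle dynamics of the stiff grid at nominal frequency), ω_nom − ω_r,i − n_i·p_i = 0 (on-grid frequency-droop dynamics), V_nom − V_r,i − m_int,i·ψ_i = 0 (integral-state dynamics), k_m,i·(V_nom − V_r,i − m_int,i·ψ_i) − m_i·q_i = 0 (on-grid voltage-droop dynamics), p_i − P_i = 0 and q_i − Q_i = 0 (low-pass power-filter dynamics). Then P_1 = P_2 = 0, Q_1 = Q_2 = 0, p_1 = p_2 = 0 and q_1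 = q_2 = 0; that is, in on-grid steady state both voltage source inverters supply zero active and zero reactive output power (so the grid alone supplies the entire demand at the point of common coupling). -/
/-- On-grid (I_gs = 1) steady state of the two-inverter system: both VSIs supply
zero active and reactive output power. -/
theorem ongrid_steady_state_zero_power
    (n₁ n₂ m₁ m₂ m_int₁ m_int₂ τ₁ τ₂ : ℝ)
    (hn₁ : 0 < n₁) (hn₂ : 0 < n₂) (hm₁ : 0 < m₁) (hm₂ : 0 < m₂)
    (hτ₁ : 0 < τ₁) (hτ₂ : 0 < τ₂)
    (km₁ km₂ : ℝ)
    (hkm₁ : km₁ = 1 - τ₁ * m_int₁ / m₁) (hkm₂ : km₂ = 1 - τ₂ * m_int₂ / m₂)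
    (ω_ref ω_r₁ ω_r₂ V_r₁ V_r₂ ψ₁ ψ₂ p₁ p₂ q₁ q₂ P₁ P₂ Q₁ Q₂ ω_nom V_nom : ℝ)
    -- angle dynamics of each VSI at equilibrium
    (hθ₁ : ω_r₁ - ω_ref = 0) (hθ₂ : ω_r₂ - ω_ref = 0)
    -- angle dynamics of the stiff grid at equilibrium
    (hθg : ω_nom - ω_ref = 0)
    -- on-grid frequency-droop dynamics at equilibrium
    (hω₁ : ω_nom - ω_r₁ - n₁ * p₁ = 0) (hω₂ : ω_nom - ω_r₂ - n₂ * p₂ = 0)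
    -- integral-state dynamics at equilibrium
    (hψ₁ : V_nom - V_r₁ - m_int₁ * ψ₁ = 0) (hψ₂ : V_nom - V_r₂ - m_int₂ * ψ₂ = 0)
    -- on-grid voltage-droop dynamics at equilibrium
    (hV₁ : km₁ * (V_nom - V_r₁ - m_int₁ * ψ₁) - m₁ * q₁ = 0)
    (hV₂ : km₂ * (V_nom - V_r₂ - m_int₂ * ψ₂) - m₂ * q₂ = 0)
    -- low-pass power-filter dynamics at equilibrium
    (hP₁ : p₁ - P₁ = 0) (hP₂ : p₂ - P₂ = 0)
    (hQ₁ : q₁ - Q₁ = 0) (hQ₂ : q₂ - Q₂ = 0) :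
    P₁ = 0 ∧ P₂ = 0 ∧ Q₁ = 0 ∧ Q₂ = 0 ∧ p₁ = 0 ∧ p₂ = 0 ∧ q₁ = 0 ∧ q₂ = 0 := by
  have hp₁ : p₁ = 0 := by
    have : n₁ * p₁ = 0 := by linarith
    exact (mul_eq_zero.mp this).resolve_left hn₁.ne'
  have hp₂ : p₂ = 0 := by
    have : n₂ * p₂ = 0 := by linarith
    exact (mul_eq_zero.mp this).resolve_left hn₂.ne'
  have hq₁ : q₁ = 0 := by
    have : m₁ * q₁ = 0 := by rw [hψ₁] at hV₁; linarith [hV₁]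
    exact (mul_eq_zero.mp this).resolve_left hm₁.ne'
  have hq₂ : q₂ = 0 := by
    have : m₂ * q₂ = 0 := by rw [hψ₂] at hV₂; linarith [hV₂]
    exact (mul_eq_zero.mp this).resolve_left hm₂.ne'
  refine ⟨by linarith, by linarith, by linarith, by linarith, hp₁, hp₂, hq₁, hq₂⟩
end

section
/- Let L_L > 0, R_L, ω_ref be real numbers (load inductance, load resistance, reference frequency), let K be a finite index set of branches (e.g., K = {grid, VSI-1, VSI-2}), and for each k ∈ K let L_k > 0 and R_k be real numbers and let i_k^d, i_k^q, V_k, θ_k : ℝ → ℝ be functions with i_k^d and i_k^q differentiable. Let v^d, v^q : ℝ → ℝ be functions. Suppose at a time t: for every k ∈ K, L_k·(i_k^d)'(t) = V_k(t)·cos θ_k(t) − R_k·i_k^d(t) − v^d(t) + ω_ref·L_k·i_k^q(t) and L_k·(i_k^q)'(t) = V_k(t)·sin θ_k(t) − R_k·i_k^q(t) − v^q(t) − ω_ref·L_k·i_k^d(t) (branch R–L line dynamics), and, with i_Load^d := Σ_{k∈K} i_k^d and i_Load^q := Σ_{k∈K} i_k^q, L_L·(i_Load^d)'(t) = v^d(t)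 − R_L·i_Load^d(t) + ω_ref·L_L·i_Load^q(t) and L_L·(i_Load^q)'(t) = v^q(t) − R_L·i_Load^q(t) − ω_ref·L_L·i_Load^d(t) (constant-impedance R–L load dynamics). Then, with k^T := 1/L_L + Σ_{k∈K} 1/L_k, the bus voltage satisfies the algebraic equations v^d(t) = (1/k^T)·Σ_{k∈K} [ (1/L_k)·V_k(t)·cos θ_k(t) + (R_L/L_L − R_k/L_k)·i_k^d(t) ] and v^q(t) = (1/k^T)·Σ_{k∈K} [ (1/L_k)·V_k(t)·sin θ_k(t) + (R_L/L_L − R_k/L_k)·i_k^q(t) ]. -/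
open Finset

lemma pcc_aux {K : Type*} [Fintype K]
    (L_L : ℝ) (hL_L : 0 < L_L) (R_L ω : ℝ)
    (L R : K → ℝ) (hL : ∀ k, 0 < L k)
    (x : K → ℝ → ℝ) (y w : K → ℝ)
    (hx : ∀ k, Differentiable ℝ (x k))
    (v : ℝ → ℝ) (t : ℝ)
    (hbranch : ∀ k, L k * deriv (x k) t =
      w k - R k * x k t - v t + ω * L k * y k)
    (hload : L_L * deriv (fun s => ∑ k, x k s) t =
      v t - R_L * (∑ k, x k t) + ω * L_L * (∑ k, y k)) :
    v t = (1 / (1 / L_L + ∑ k, 1 / L k)) *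
        ∑ k, ((1 / L k) * w k + (R_L / L_L - R k / L k) * x k t) := by
  have hT : 0 < 1 / L_L + ∑ k, 1 / L k :=
    add_pos_of_pos_of_nonneg (by positivity)
      (Finset.sum_nonneg fun k _ => le_of_lt (one_div_pos.mpr (hL k)))
  have hS : deriv (fun s => ∑ k, x k s) t = ∑ k, deriv (x k) t :=
    deriv_fun_sum (fun k _ => (hx k).differentiableAt)
  rw [hS] at hload
  have hk : ∀ k, deriv (x k) t =
      (1 / L k) * w k - (R k / L k) * x k t - (1 / L k) * v t + ω * y k := by
    intro k
    have h := hbranch k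
    have hLk := (hL k).ne'
    field_simp at h ⊢
    linarith
  rw [Finset.sum_congr rfl (fun k _ => hk k)] at hload
  have key : v t * (1 / L_L + ∑ k, 1 / L k) =
      ∑ k, ((1 / L k) * w k + (R_L / L_L - R k / L k) * x k t) := by
    have hexp : ∑ k, ((1 / L k) * w k - (R k / L k) * x k t - (1 / L k) * v t + ω * y k)
        = (∑ k, (1 / L k) * w k) - (∑ k, (R k / L k) * x k t)
          - (∑ k, 1 / L k) * v t + ω * (∑ k, y k) := by
      rw [Finset.sum_mul, Finset.mul_sum]
      rw [← Finset.sum_sub_distrib, ← Finset.sum_sub_distrib, ← Finset.sum_add_distrib]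
    rw [hexp] at hload
    have hexp2 : ∑ k, ((1 / L k) * w k + (R_L / L_L - R k / L k) * x k t)
        = (∑ k, (1 / L k) * w k) - (∑ k, (R k / L k) * x k t)
          + (R_L / L_L) * ∑ k, x k t := by
      rw [Finset.mul_sum, ← Finset.sum_sub_distrib, ← Finset.sum_add_distrib]
      exact Finset.sum_congr rfl fun k _ => by ring
    rw [hexp2]
    have hLL := hL_L.ne'
    field_simp at hload ⊢
    nlinarith [hload]
  rw [← key, mul_comm (v t), ← mul_assoc, one_div_mul_cancel hT.ne', one_mul]

/-- Elimination of the PCC bus voltage: expressing the dq-axis bus voltage as an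
algebraic function of the source voltages, angles and branch currents, from the
branch R–L line dynamics and the constant-impedance R–L load dynamics. -/
theorem pcc_voltage_algebraic_elimination
    {K : Type*} [Fintype K]
    (L_L : ℝ) (hL_L : 0 < L_L) (R_L ω_ref : ℝ)
    (L R : K → ℝ) (hL : ∀ k, 0 < L k)
    (id iq : K → ℝ → ℝ) (V θ : K → ℝ → ℝ)
    (hid : ∀ k, Differentiable ℝ (id k)) (hiq : ∀ k, Differentiable ℝ (iq k))
    (vd vq : ℝ → ℝ) (t : ℝ)
    -- branch R–L line dynamics at time t
    (hbranchd : ∀ k, L k * deriv (id k) t =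
      V k t * Real.cos (θ k t) - R k * id k t - vd t + ω_ref * L k * iq k t)
    (hbranchq : ∀ k, L k * deriv (iq k) t =
      V k t * Real.sin (θ k t) - R k * iq k t - vq t - ω_ref * L k * id k t)
    -- constant-impedance R–L load dynamics at time t, with load current the
    -- sum of all branch currents
    (hloadd : L_L * deriv (fun s => ∑ k, id k s) t =
      vd t - R_L * (∑ k, id k t) + ω_ref * L_L * (∑ k, iq k t))
    (hloadq : L_L * deriv (fun s => ∑ k, iq k s) t =
      vq t - R_L * (∑ k, iq k t) - ω_ref * L_L * (∑ k, id k t)) :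
    vd t = (1 / (1 / L_L + ∑ k, 1 / L k)) *
        ∑ k, ((1 / L k) * (V k t * Real.cos (θ k t)) +
          (R_L / L_L - R k / L k) * id k t) ∧
    vq t = (1 / (1 / L_L + ∑ k, 1 / L k)) *
        ∑ k, ((1 / L k) * (V k t * Real.sin (θ k t)) +
          (R_L / L_L - R k / L k) * iq k t) := by
  constructor
  · exact pcc_aux L_L hL_L R_L ω_ref L R hL id (fun k => iq k t)
      (fun k => V k t * Real.cos (θ k t)) hid vd t hbranchd hloadd
  · exact pcc_aux L_L hL_L R_L (-ω_ref) L R hL iq (fun k => id k t)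
      (fun k => V k t * Real.sin (θ k t)) hiq vq t
      (fun k => by have := hbranchq k; ring_nf at this ⊢; linarith)
      (by have := hloadq; ring_nf at this ⊢; linarith)
end
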